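/- Let (x_k) in a normed space satisfy x_{k+1} = (1-ρ_{k+1}) x_k + ρ_{k+1} x̂_{k+1} with (x̂_k) bounded, ρ_k ∈ (0,1), ρ_k → 0, ∑ ρ_k = ∞, ∑ ρ_k² < ∞, and suppose ‖x̂_{k+1} - x̂_k‖ ≤ L‖x_k - x_{k-1}‖ + c_k with ∑ c_k < ∞ and L ≥ 0. Then ‖x_{k+1} - x_k‖ → 0. -/

import Mathlib

open Filter

/-!
Each step moves `x k` a fraction `ρ (k + 1)` of the way towards `xhat (k + 1)`, so
`x (k + 1) - x k = ρ (k + 1) • (xhat (k + 1) - x k)`. The iterates stay in the convex ball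
containing `x 0` and all the `xhat k`, hence the increments are `O(ρ (k + 1))` and vanish
with the step sizes.
-/

section RelaxedIteration

variable {E : Type*} [AddCommGroup E] [Module ℝ E] {x y : ℕ → E} {ρ : ℕ → ℝ}

theorem mem_of_relaxed_iteration {s : Set E} (hs : Convex ℝ s) (hρ : ∀ k, ρ k ∈ Set.Icc 0 1)
    (hrec : ∀ k, x (k + 1) = (1 - ρ (k + 1)) • x k + ρ (k + 1) • y (k + 1))
    (hx₀ : x 0 ∈ s) (hy : ∀ k, y k ∈ s) (k : ℕ) : x k ∈ s := by
  induction k with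
  | zero => exact hx₀
  | succ k ih =>
    rw [hrec k]
    exact hs ih (hy _) (by linarith [(hρ (k + 1)).2]) (hρ (k + 1)).1 (by ring)

theorem relaxed_iteration_sub
    (hrec : ∀ k, x (k + 1) = (1 - ρ (k + 1)) • x k + ρ (k + 1) • y (k + 1)) (k : ℕ) :
    x (k + 1) - x k = ρ (k + 1) • (y (k + 1) - x k) := by
  rw [hrec k]
  module

end RelaxedIteration

theorem stmt_6_general {E : Type*} [NormedAddCommGroup E] [NormedSpace ℝ E]
    (x xhat : ℕ → E) (ρ : ℕ → ℝ)
    (hρ : ∀ k, ρ k ∈ Set.Ioo (0 : ℝ) 1)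
    (hρ0 : Tendsto ρ atTop (nhds 0))
    (hbdd : ∃ C, ∀ k, ‖xhat k‖ ≤ C)
    (hrec : ∀ k, x (k + 1) = (1 - ρ (k + 1)) • x k + ρ (k + 1) • xhat (k + 1)) :
    Tendsto (fun k => ‖x (k + 1) - x k‖) atTop (nhds 0) := by
  obtain ⟨C, hC⟩ := hbdd
  set M := max ‖x 0‖ C
  have hball : ∀ k, x k ∈ Metric.closedBall 0 M :=
    mem_of_relaxed_iteration (convex_closedBall 0 M) (fun k => Set.Ioo_subset_Icc_self (hρ k))
      hrec (mem_closedBall_zero_iff.2 (le_max_left _ _))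
      (fun k => mem_closedBall_zero_iff.2 ((hC k).trans (le_max_right _ _)))
  have hstep : ∀ k, ‖x (k + 1) - x k‖ ≤ ρ (k + 1) * (C + M) := fun k => by
    rw [relaxed_iteration_sub hrec, norm_smul, Real.norm_of_nonneg (hρ (k + 1)).1.le]
    gcongr
    · exact (hρ (k + 1)).1.le
    · exact (norm_sub_le _ _).trans (add_le_add (hC _) (mem_closedBall_zero_iff.1 (hball k)))
  have hρM : Tendsto (fun k => ρ (k + 1) * (C + M)) atTop (nhds 0) := by
    simpa using ((tendsto_add_atTop_iff_nat 1).2 hρ0).mul_const (C + M)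
  exact squeeze_zero (fun _ => norm_nonneg _) hstep hρM

/-- Asymptotic stationarity of the averaged iterates: under the inertial
update with diminishing, non-summable-but-square-summable step sizes, and a
Lipschitz-plus-summable-perturbation bound on the increments of the
market-clearing solutions `x̂`, the successive differences of the iterates
vanish. -/
theorem stmt_6 {E : Type*} [NormedAddCommGroup E] [NormedSpace ℝ E]
    (x xhat : ℕ → E) (ρ : ℕ → ℝ) (c : ℕ → ℝ) (L : ℝ)
    (hL : 0 ≤ L)
    (hρ : ∀ k, ρ k ∈ Set.Ioo (0 : ℝ) 1)
    (hρ0 : Tendsto ρ atTop (nhds 0))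
    (hρdiv : Tendsto (fun n => ∑ k ∈ Finset.range n, ρ k) atTop atTop)
    (hρsq : Summable (fun k => ρ k ^ 2))
    (hbdd : ∃ C, ∀ k, ‖xhat k‖ ≤ C)
    (hcsum : Summable c)
    (hrec : ∀ k, x (k + 1) = (1 - ρ (k + 1)) • x k + ρ (k + 1) • xhat (k + 1))
    (hlip : ∀ k, ‖xhat (k + 2) - xhat (k + 1)‖ ≤ L * ‖x (k + 1) - x k‖ + c k) :
    Tendsto (fun k => ‖x (k + 1) - x k‖) atTop (nhds 0) :=
  stmt_6_general x xhat ρ hρ hρ0 hbdd hrec
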